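/- Let $u_1, \dots, u_n$ be elements of the free group $F_2 = F(a,b)$ such that in the reduced form of each $u_i$, every occurrence of the generator $a$ has exponent of absolute value at most $1$. Then in the cyclic reduction of the product $u_1 u_2 \cdots u_n$, viewed as a cyclic word, every maximal block of $a$'s has exponent of absolute value at most $n+1$. -/

import Mathlib

open FreeGroup List

abbrev F2 := FreeGroup (Fin 2)

/-- The generator `a` of `F₂`. -/
def ga : F2 := FreeGroup.of 0

/-- The generator `b` of `F₂`. -/
def gb : F2 := FreeGroup.of 1

/-- `v` contains a block `x^{±k}`: `k` consecutive occurrences of the letter `x`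
with the same sign, as a contiguous subword of the reduced word of `v`.
Thus "every `x`-exponent of `v` has absolute value `≤ n`" is `¬ HasBlock x (n+1) v`. -/
def HasBlock (x : Fin 2) (k : ℕ) (v : F2) : Prop :=
  (List.replicate k (x, true)) <:+: v.toWord ∨ (List.replicate k (x, false)) <:+: v.toWord

/-- A reduced word is cyclically reduced if its last letter is not
the inverse of its first letter. -/
def CyclicallyReduced (l : List (Fin 2 × Bool)) : Prop :=
  ∀ p ∈ l.head?, ∀ q ∈ l.getLast?, q ≠ (p.1, !p.2)

/-- `(x, y)` is a basis of `F₂`: the image of `(a, b)` under an automorphism. -/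
def IsBasis (x y : F2) : Prop := ∃ φ : F2 ≃* F2, φ ga = x ∧ φ gb = y

/-!
Reduced words multiply by cancelling only at the junction, so the reduced word of `u₁ ⋯ uₙ`
is a concatenation of at most `n` pieces, each a subword of some `uᵢ` and therefore free of
`a^{±2}`: a block `a^{±m}` inside it runs through `m` different pieces. Conjugating the
cyclically reduced `c` one letter at a time shows that the reduced word of `g c g⁻¹` is
`p w p⁻¹` with `w` a rotation of the word of `c`. A block of `c` that wraps around the end of
`w` splits into a prefix and a suffix of `w`, which use two runs of pieces sharing at most one
piece; hence every block of `c` has length at most `n + 1`.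
-/

namespace List

variable {β : Type*} {x : β} {k : ℕ}

theorem le_of_replicate_infix {m : ℕ} {v : List β}
    (hv : ¬ replicate (k + 1) x <:+: v) (h : replicate m x <:+: v) : m ≤ k := by
  by_contra! hkm
  refine hv (IsInfix.trans ?_ h)
  rw [← Nat.add_sub_cancel' hkm, replicate_add (k + 1)]
  exact infix_append_left

theorem le_mul_length_of_replicate_infix_flatten {m : ℕ} {vs : List (List β)}
    (hvs : ∀ v ∈ vs, ¬ replicate (k + 1) x <:+: v) (h : replicate m x <:+: vs.flatten) :
    m ≤ k * vs.length := by
  induction vs generalizing m with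
  | nil => simpa using h
  | cons v vs ih =>
    have hv {j} := le_of_replicate_infix (m := j) (hvs v mem_cons_self)
    have ih {j} := ih (m := j) fun w hw => hvs w (mem_cons_of_mem v hw)
    rw [flatten_cons, infix_append_iff] at h
    rw [length_cons, Nat.mul_succ]
    rcases h with h | h | ⟨l₁, l₂, hl, h₁, h₂⟩
    · have := hv h; omega
    · have := ih h; omega
    · obtain ⟨hlen, hl₁, hl₂⟩ := replicate_eq_append_iff.1 hl
      have := hv (hl₁ ▸ h₁.isInfix)
      have := ih (hl₂ ▸ h₂.isInfix)
      omega

theorem add_le_mul_length_succ_of_infix_flatten {a b : ℕ} {Y : List β}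
    {vs : List (List β)} (hvs : ∀ v ∈ vs, ¬ replicate (k + 1) x <:+: v)
    (h : replicate a x ++ Y ++ replicate b x <:+: vs.flatten) :
    a + b ≤ k * (vs.length + 1) := by
  obtain ⟨X, Z, hXZ⟩ := h
  have hsplit : vs.flatten = (X ++ replicate a x) ++ (Y ++ replicate b x ++ Z) := by
    rw [← hXZ]; simp only [append_assoc]
  -- cutting `vs.flatten` between the two blocks splits at most one piece in two
  obtain ⟨as, bs, hlen, hpieces, hA, hB⟩ : ∃ as bs : List (List β),
      as.length + bs.length ≤ vs.length + 1 ∧ (∀ w ∈ as ++ bs, ∃ v ∈ vs, w <:+: v) ∧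
      X ++ replicate a x = as.flatten ∧ Y ++ replicate b x ++ Z = bs.flatten := by
    rcases flatten_eq_append_iff.1 hsplit with
      ⟨as, bs, rfl, hA, hB⟩ | ⟨as, bs, c, cs, ds, rfl, hA, hB⟩
    · exact ⟨as, bs, by simp, fun w hw => ⟨w, hw, infix_refl w⟩, hA, hB⟩
    · refine ⟨as ++ [bs], (c :: cs) :: ds, by simp; omega, ?_, by simpa using hA,
        by simpa using hB⟩
      intro w hw
      simp only [append_assoc, singleton_append, mem_append, mem_cons] at hw
      rcases hw with hw | rfl | rfl | hw
      · exact ⟨w, by simp [hw], infix_refl w⟩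
      · exact ⟨w ++ c :: cs, by simp, infix_append_left⟩
      · exact ⟨bs ++ c :: cs, by simp, infix_append_right⟩
      · exact ⟨w, by simp [hw], infix_refl w⟩
  have hsparse : ∀ w ∈ as ++ bs, ¬ replicate (k + 1) x <:+: w := fun w hw h => by
    obtain ⟨v, hv, hwv⟩ := hpieces w hw
    exact hvs v hv (h.trans hwv)
  have ha := le_mul_length_of_replicate_infix_flatten
    (fun w hw => hsparse w (mem_append_left bs hw)) (hA ▸ infix_append_right)
  have hb := le_mul_length_of_replicate_infix_flatten
    (fun w hw => hsparse w (mem_append_right as hw)) (hB ▸ infix_append _ _ _)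
  nlinarith

theorem exists_flatten_eq_of_suffix_flatten {q : List β} {vs : List (List β)}
    (h : q <:+ vs.flatten) :
    ∃ ws : List (List β), ws.length ≤ vs.length ∧ (∀ w ∈ ws, ∃ v ∈ vs, w <:+: v) ∧
      q = ws.flatten := by
  obtain ⟨s, hs⟩ := h
  rcases flatten_eq_append_iff.1 hs.symm with
    ⟨as, bs, rfl, -, rfl⟩ | ⟨as, bs, c, cs, ds, rfl, -, rfl⟩
  · exact ⟨bs, by simp, fun w hw => ⟨w, by simp [hw], infix_refl w⟩, rfl⟩
  · refine ⟨(c :: cs) :: ds, by simp, ?_, by simp⟩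
    intro w hw
    rcases mem_cons.1 hw with rfl | hw
    · exact ⟨bs ++ c :: cs, by simp, infix_append_right⟩
    · exact ⟨w, by simp [hw], infix_refl w⟩

theorem exists_infix_append_swap_of_infix_append {R A B : List β} (h : R <:+: A ++ B) :
    ∃ R₁ R₂ Y, R = R₁ ++ R₂ ∧ R₂ ++ Y ++ R₁ <:+: B ++ A := by
  rcases infix_append_iff.1 h with
    ⟨s, t, rfl⟩ | ⟨s, t, rfl⟩ | ⟨R₁, R₂, rfl, ⟨s, rfl⟩, ⟨t, rfl⟩⟩
  · exact ⟨R, [], B ++ s, by simp, [], t, by simp⟩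
  · exact ⟨[], R, t ++ A, by simp, s, [], by simp⟩
  · exact ⟨R₁, R₂, t ++ s, rfl, [], [], by simp⟩

theorem IsRotated.exists_infix_append_swap {R l l' : List β} (hl : l ~r l') (h : R <:+: l) :
    ∃ R₁ R₂ Y, R = R₁ ++ R₂ ∧ R₂ ++ Y ++ R₁ <:+: l' := by
  obtain ⟨n, rfl⟩ := hl
  rw [rotate_eq_drop_append_take_mod]
  rw [← take_append_drop (n % l.length) l] at h
  exact exists_infix_append_swap_of_infix_append h

end List

namespace FreeGroup

variable {α : Type*}

theorem isCyclicallyReduced_iff_isReduced_append_self {L : List (α × Bool)} :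
    IsCyclicallyReduced L ↔ IsReduced (L ++ L) := by
  refine ⟨fun h => by simpa using (h.flatten_replicate 2).isReduced, fun h => ?_⟩
  exact ⟨h.infix infix_append_left, (isChain_append.1 h).2.2⟩

theorem IsCyclicallyReduced.append_comm {L₁ L₂ : List (α × Bool)}
    (h : IsCyclicallyReduced (L₁ ++ L₂)) : IsCyclicallyReduced (L₂ ++ L₁) := by
  rw [isCyclicallyReduced_iff_isReduced_append_self]
  refine (h.flatten_replicate 3).isReduced.infix ⟨L₁, L₂, ?_⟩
  simp

theorem _root_.List.IsRotated.isCyclicallyReduced {L L' : List (α × Bool)} (hr : L ~r L')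
    (h : IsCyclicallyReduced L) : IsCyclicallyReduced L' := by
  obtain ⟨n, rfl⟩ := hr
  rw [rotate_eq_drop_append_take_mod]
  rw [← take_append_drop (n % L.length) L] at h
  exact h.append_comm

theorem isReduced_cons_append_singleton {L : List (α × Bool)} {a : α} {b : Bool}
    (hL : IsReduced L) (hne : L ≠ []) (hhead : L.head? ≠ some (a, !b))
    (hlast : L.getLast? ≠ some (a, b)) : IsReduced ((a, b) :: L ++ [(a, !b)]) := by
  refine IsReduced.append_overlap (L₁ := [(a, b)]) ?_ ?_ hne
  · refine isChain_cons.2 ⟨?_, hL⟩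
    rintro ⟨d1, d2⟩ hd rfl
    cases b <;> cases d2 <;> simp_all
  · refine isChain_append.2 ⟨hL, isChain_singleton _, ?_⟩
    rintro ⟨e1, e2⟩ he _ ⟨⟩ rfl
    cases b <;> cases e2 <;> simp_all

theorem inv_mk_singleton (a : α) (b : Bool) : (mk [(a, b)])⁻¹ = mk [(a, !b)] := by
  simp [inv_mk, invRev]

section DecidableEq

variable [DecidableEq α]

theorem IsReduced.toWord_mk {L : List (α × Bool)} (h : IsReduced L) :
    (mk L).toWord = L := by
  rw [FreeGroup.toWord_mk, h.reduce_eq]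

theorem IsReduced.exists_reduce_append_eq {L₁ L₂ : List (α × Bool)} (h₁ : IsReduced L₁)
    (h₂ : IsReduced L₂) : ∃ p q, p <+: L₁ ∧ q <:+ L₂ ∧ reduce (L₁ ++ L₂) = p ++ q := by
  induction L₁ with
  | nil => exact ⟨[], L₂, nil_prefix, suffix_refl L₂, h₂.reduce_eq⟩
  | cons a L ih =>
    obtain ⟨p, q, hp, hq, he⟩ := ih (h₁.infix (suffix_cons a L).isInfix)
    rw [cons_append, reduce.cons, he]
    rcases p with _ | ⟨d, p⟩
    · rcases q with _ | ⟨d, q⟩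
      · exact ⟨[a], [], by simp, nil_suffix, rfl⟩
      · simp only [nil_append]
        split_ifs
        · exact ⟨[], q, nil_prefix, (suffix_cons d q).trans hq, rfl⟩
        · exact ⟨[a], d :: q, by simp, hq, rfl⟩
    · obtain ⟨L', rfl⟩ := hp
      have hcancel : ¬ (a.1 = d.1 ∧ a.2 = !d.2) := fun ⟨h1, h2⟩ => by
        have := (isReduced_cons_cons.1 h₁).1 h1
        simp_all
      exact ⟨a :: d :: p, q, by simp, hq, by simp [hcancel]⟩

theorem exists_toWord_mul_eq (x y : FreeGroup α) :
    ∃ p q, p <+: x.toWord ∧ q <:+ y.toWord ∧ (x * y).toWord = p ++ q := by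
  rw [toWord_mul]
  exact isReduced_toWord.exists_reduce_append_eq isReduced_toWord

theorem exists_toWord_prod_eq_flatten (us : List (FreeGroup α)) :
    ∃ vs : List (List (α × Bool)), vs.length ≤ us.length ∧
      (∀ v ∈ vs, ∃ u ∈ us, v <:+: u.toWord) ∧ us.prod.toWord = vs.flatten := by
  induction us with
  | nil => exact ⟨[], by simp, by simp, by simp⟩
  | cons u us ih =>
    obtain ⟨vs, hlen, hvs, hprod⟩ := ih
    obtain ⟨p, q, hp, hq, hmul⟩ := exists_toWord_mul_eq u us.prod
    obtain ⟨ws, hwlen, hws, rfl⟩ := exists_flatten_eq_of_suffix_flatten (hprod ▸ hq)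
    refine ⟨p :: ws, by simp; omega, ?_, by rw [prod_cons, hmul, flatten_cons]⟩
    intro w hw
    rcases mem_cons.1 hw with rfl | hw
    · exact ⟨u, mem_cons_self, hp.isInfix⟩
    · obtain ⟨v, hv, hwv⟩ := hws w hw
      obtain ⟨u', hu', hvu⟩ := hvs v hv
      exact ⟨u', mem_cons_of_mem u hu', hwv.trans hvu⟩

section ConjLetter

variable (a : α) (b : Bool)

theorem toWord_conj_mk_singleton {L : List (α × Bool)} (hL : IsReduced L) (hne : L ≠ [])
    (hhead : L.head? ≠ some (a, !b)) (hlast : L.getLast? ≠ some (a, b)) :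
    (mk [(a, b)] * mk L * (mk [(a, b)])⁻¹).toWord = (a, b) :: L ++ [(a, !b)] := by
  rw [inv_mk_singleton, mul_mk, mul_mk, singleton_append,
    (isReduced_cons_append_singleton hL hne hhead hlast).toWord_mk]

theorem toWord_conj_mk_singleton_cons {t : List (α × Bool)} (h : IsReduced (t ++ [(a, !b)])) :
    (mk [(a, b)] * mk ((a, !b) :: t) * (mk [(a, b)])⁻¹).toWord = t ++ [(a, !b)] := by
  have hx : mk ((a, !b) :: t) = (mk [(a, b)])⁻¹ * mk t := by
    rw [inv_mk_singleton, mul_mk, singleton_append]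
  rw [hx, mul_inv_cancel_left, inv_mk_singleton, mul_mk, h.toWord_mk]

theorem toWord_conj_mk_singleton_concat {t : List (α × Bool)} (h : IsReduced ((a, b) :: t)) :
    (mk [(a, b)] * mk (t ++ [(a, b)]) * (mk [(a, b)])⁻¹).toWord = (a, b) :: t := by
  rw [← mul_mk, ← mul_assoc, mul_inv_cancel_right, mul_mk, singleton_append, h.toWord_mk]

theorem toWord_conj_mk_singleton_cons_concat {L : List (α × Bool)} (h : IsReduced L) :
    (mk [(a, b)] * mk ((a, !b) :: L ++ [(a, b)]) * (mk [(a, b)])⁻¹).toWord = L := by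
  have hx : mk ((a, !b) :: L ++ [(a, b)]) = (mk [(a, b)])⁻¹ * mk L * mk [(a, b)] := by
    rw [inv_mk_singleton, mul_mk, mul_mk, singleton_append]
  have hy : mk [(a, b)] * mk ((a, !b) :: L ++ [(a, b)]) * (mk [(a, b)])⁻¹ = mk L := by
    rw [hx]; group
  rw [hy, h.toWord_mk]

end ConjLetter

def IsConjOfRotation (c L : List (α × Bool)) : Prop :=
  ∃ p w, w ~r c ∧ L = p ++ w ++ invRev p

theorem isConjOfRotation_conj_mk_singleton_of_isRotated {c w : List (α × Bool)}
    (hc : IsCyclicallyReduced c) (hw : w ~r c) (a : α) (b : Bool) :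
    IsConjOfRotation c (mk [(a, b)] * mk w * (mk [(a, b)])⁻¹).toWord := by
  by_cases hhead : w.head? = some (a, !b)
  · obtain ⟨t, rfl⟩ := head?_eq_some_iff.1 hhead
    have hrot : t ++ [(a, !b)] ~r (a, !b) :: t := isRotated_concat _ _
    refine ⟨[], _, hrot.trans hw, ?_⟩
    rw [toWord_conj_mk_singleton_cons a b ((hrot.trans hw).symm.isCyclicallyReduced hc).isReduced]
    simp
  by_cases hlast : w.getLast? = some (a, b)
  · obtain ⟨t, rfl⟩ := getLast?_eq_some_iff.1 hlast
    have hrot : (a, b) :: t ~r t ++ [(a, b)] := IsRotated.cons_append_singleton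
    refine ⟨[], _, hrot.trans hw, ?_⟩
    rw [toWord_conj_mk_singleton_concat a b ((hrot.trans hw).symm.isCyclicallyReduced hc).isReduced]
    simp
  by_cases hnil : w = []
  · subst hnil
    refine ⟨[], [], hw, ?_⟩
    rw [← one_eq_mk, mul_one, mul_inv_cancel, toWord_one]
    rfl
  refine ⟨[(a, b)], w, hw, ?_⟩
  rw [toWord_conj_mk_singleton a b (hw.symm.isCyclicallyReduced hc).isReduced hnil hhead hlast]
  simp [invRev]

theorem IsConjOfRotation.conj_mk_singleton {c : List (α × Bool)} (hc : IsCyclicallyReduced c)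
    {x : FreeGroup α} (hx : IsConjOfRotation c x.toWord) (a : α) (b : Bool) :
    IsConjOfRotation c (mk [(a, b)] * x * (mk [(a, b)])⁻¹).toWord := by
  obtain ⟨p, w, hw, hX⟩ := hx
  have hred : IsReduced (p ++ w ++ invRev p) := hX ▸ isReduced_toWord
  rw [← mk_toWord (x := x), hX]
  rcases p with _ | ⟨d, p⟩
  · simp only [nil_append, invRev_empty, append_nil]
    exact isConjOfRotation_conj_mk_singleton_of_isRotated hc hw a b
  by_cases hd : d = (a, !b)
  · subst hd
    refine ⟨p, w, hw, ?_⟩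
    have hsplit : (a, !b) :: p ++ w ++ invRev ((a, !b) :: p)
        = (a, !b) :: (p ++ w ++ invRev p) ++ [(a, b)] := by
      simp [invRev]
    rw [hsplit] at hred ⊢
    exact toWord_conj_mk_singleton_cons_concat a b (hred.infix ⟨[(a, !b)], [(a, b)], rfl⟩)
  have hsplit : d :: p ++ w ++ invRev (d :: p) = (d :: p ++ w ++ invRev p) ++ [(d.1, !d.2)] := by
    simp [invRev]
  have hlast : (d :: p ++ w ++ invRev (d :: p)).getLast? ≠ some (a, b) := by
    rw [hsplit, getLast?_concat]
    rintro ⟨⟩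
    simp at hd
  refine ⟨(a, b) :: d :: p, w, hw, ?_⟩
  rw [toWord_conj_mk_singleton a b hred (by simp) (by simpa using hd) hlast]
  simp [invRev]

theorem isConjOfRotation_toWord_conj {c : FreeGroup α} (hc : IsCyclicallyReduced c.toWord)
    (g : FreeGroup α) : IsConjOfRotation c.toWord (g * c * g⁻¹).toWord := by
  rw [← mk_toWord (x := g)]
  induction g.toWord with
  | nil => exact ⟨[], c.toWord, IsRotated.refl _, by simp [← one_eq_mk]⟩
  | cons ℓ L ih =>
    have hconj : mk (ℓ :: L) * c * (mk (ℓ :: L))⁻¹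
        = mk [ℓ] * (mk L * c * (mk L)⁻¹) * (mk [ℓ])⁻¹ := by
      rw [← singleton_append, ← mul_mk]; group
    rw [hconj]
    exact ih.conj_mk_singleton hc ℓ.1 ℓ.2

end DecidableEq

end FreeGroup

theorem CyclicallyReduced.isCyclicallyReduced {L : List (Fin 2 × Bool)}
    (hc : CyclicallyReduced L) (hL : IsReduced L) : IsCyclicallyReduced L := by
  refine ⟨hL, fun q hq p hp hqp => ?_⟩
  have := hc p hp q hq
  obtain ⟨q1, q2⟩ := q
  obtain ⟨p1, p2⟩ := p
  cases q2 <;> cases p2 <;> simp_all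

theorem hasBlock_iff {x : Fin 2} {k : ℕ} {v : F2} :
    HasBlock x k v ↔ ∃ s, replicate k (x, s) <:+: v.toWord := by
  simp [HasBlock, or_comm]

/-- If every `a`-exponent of each `uᵢ` has absolute value at most 1, then in the
cyclic reduction of `u₁ ⋯ uₙ` (any cyclically reduced conjugate `c`, which accounts
for all rotations of the cyclic word), every `a`-block has absolute exponent at most
`n + 1`. -/
theorem lemma_one_at_a_time_cyclic (n : ℕ) (u : Fin n → F2)
    (h : ∀ i, ¬ HasBlock 0 2 (u i))
    (c g : F2) (hc : (List.ofFn u).prod = g * c * g⁻¹)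
    (hcr : CyclicallyReduced c.toWord) :
    ¬ HasBlock 0 (n + 2) c := by
  intro hblock
  obtain ⟨s, hblock⟩ := hasBlock_iff.1 hblock
  obtain ⟨vs, hlen, hvs, hprod⟩ := exists_toWord_prod_eq_flatten (List.ofFn u)
  obtain ⟨p, w, hw, hconj⟩ :=
    isConjOfRotation_toWord_conj (hcr.isCyclicallyReduced isReduced_toWord) g
  obtain ⟨R₁, R₂, Y, hR, hwrap⟩ := hw.symm.exists_infix_append_swap hblock
  obtain ⟨hRlen, hR₁, hR₂⟩ := replicate_eq_append_iff.1 hR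
  have hW : replicate R₂.length (0, s) ++ Y ++ replicate R₁.length (0, s) <:+: vs.flatten := by
    rw [← hprod, hc, hconj, ← hR₁, ← hR₂]
    exact hwrap.trans (infix_append _ _ _)
  have hsparse : ∀ v ∈ vs, ¬ replicate (1 + 1) ((0 : Fin 2), s) <:+: v := by
    intro v hv hv2
    obtain ⟨_, hu, hvu⟩ := hvs v hv
    obtain ⟨i, rfl⟩ := mem_ofFn.1 hu
    exact h i (hasBlock_iff.2 ⟨s, hv2.trans hvu⟩)
  have := add_le_mul_length_succ_of_infix_flatten hsparse hW
  simp only [length_ofFn] at hlen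
  omega
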